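/- arXiv:2505.23545 — 4 statements merged into one kernel-verified Lean document; each statement's English description precedes it below -/
import Mathlib

section
/- For each h > 0 there exists exactly one function u that solves BVP(h); that is, there exists a twice continuously differentiable u : [0,1] → ℝ with (κ/h²)·u''(y) = r(u(y)) for all y ∈ [0,1], u'(0) = 0 and u(1) + (L·κ/(κ_L·h))·u'(1) = c_*, and any two such functions coincide on [0,1]. -/
open Set MeasureTheory intervalIntegral Filter

/-- `u` (with derivative `u'` and second derivative `u''`) solves the boundary value
problem BVP(h): `(κ/h²)·u'' = r(u)` on `[0,1]`, `u'(0) = 0`,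
`u(1) + (L·κ/(κ_L·h))·u'(1) = c_*`. -/
def SolvesBVP (κ κL L cstar : ℝ) (r : ℝ → ℝ) (h : ℝ)
    (u u' u'' : ℝ → ℝ) : Prop :=
  (∀ y ∈ Icc (0:ℝ) 1, HasDerivWithinAt u (u' y) (Icc (0:ℝ) 1) y) ∧
  (∀ y ∈ Icc (0:ℝ) 1, HasDerivWithinAt u' (u'' y) (Icc (0:ℝ) 1) y) ∧
  ContinuousOn u'' (Icc (0:ℝ) 1) ∧
  (∀ y ∈ Icc (0:ℝ) 1, (κ / h ^ 2) * u'' y = r (u y)) ∧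
  u' 0 = 0 ∧
  u 1 + (L * κ / (κL * h)) * u' 1 = cstar

/-!
Uniqueness is an energy argument: the difference `w` of two solutions satisfies `w·w'' ≥ 0`
because `r` is monotone, and together with the boundary conditions this forces `w = 0`.

Existence is by shooting. Let `u_a` solve `u'' = (h²/κ)·r(u)`, `u(0) = a`, `u'(0) = 0`, and
`Φ(a) = u_a(1) + c·u_a'(1)` with `c = L·κ/(κ_L·h)`. Then `Φ(0) = 0`, and `Φ(c_*) ≥ c_*`
because `u_{c_*}` is nondecreasing (`r ≥ 0` on `[0, ∞)`). By Grönwall's inequality `Φ` is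
continuous, so the intermediate value theorem gives `a` with `Φ(a) = c_*`.
-/

theorem monotoneOn_Icc_of_hasDerivWithinAt_nonneg {f f' : ℝ → ℝ} {a b : ℝ}
    (hf : ∀ x ∈ Icc a b, HasDerivWithinAt f (f' x) (Icc a b) x)
    (hf' : ∀ x ∈ Ioo a b, 0 ≤ f' x) : MonotoneOn f (Icc a b) := by
  refine monotoneOn_of_hasDerivWithinAt_nonneg (convex_Icc a b)
    (fun x hx => (hf x hx).continuousWithinAt) (fun x hx => ?_) (by simpa using hf')
  rw [interior_Icc] at hx ⊢
  exact (hf x (Ioo_subset_Icc_self hx)).mono Ioo_subset_Icc_self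

theorem HasDerivWithinAt.Ici_of_Icc {E : Type*} [NormedAddCommGroup E] [NormedSpace ℝ E]
    {f : ℝ → E} {f' : E} {a b x : ℝ} (hf : HasDerivWithinAt f f' (Icc a b) x)
    (hx : x ∈ Ico a b) : HasDerivWithinAt f f' (Ici x) x :=
  hf.mono_of_mem_nhdsWithin (Icc_mem_nhdsGE_of_mem hx)

theorem Monotone.mul_sub_nonneg {r : ℝ → ℝ} (hr : Monotone r) (x y : ℝ) :
    0 ≤ (x - y) * (r x - r y) := by
  rcases le_total x y with hxy | hxy
  · exact mul_nonneg_of_nonpos_of_nonpos (sub_nonpos.2 hxy) (sub_nonpos.2 (hr hxy))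
  · exact mul_nonneg (sub_nonneg.2 hxy) (sub_nonneg.2 (hr hxy))

theorem Continuous.apply_zero_eq_zero_of_mul_pos {r : ℝ → ℝ} (hr : Continuous r)
    (hsign : ∀ s : ℝ, s ≠ 0 → s * r s > 0) : r 0 = 0 := by
  have hneg : Iio 0 ⊆ {s | r s ≤ 0} := fun s hs =>
    (neg_of_mul_pos_right (hsign s hs.ne) (le_of_lt hs)).le
  have hpos : Ioi 0 ⊆ {s | 0 ≤ r s} := fun s hs =>
    (pos_of_mul_pos_right (hsign s hs.ne') (le_of_lt hs)).le
  refine le_antisymm ?_ ?_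
  · exact closure_minimal hneg (isClosed_le hr continuous_const) (by simp)
  · exact closure_minimal hpos (isClosed_le continuous_const hr) (by simp)

/-- `W = w·w'` has derivative `w'² + w·w'' ≥ 0` and `W(0) = 0`, so `W ≥ 0`. Hence `w²`, with
derivative `2W`, is nondecreasing, while `w(1)² = -c·W(1) ≤ 0`. -/
theorem eqOn_zero_of_mul_deriv2_nonneg {w w' w'' : ℝ → ℝ} {c : ℝ} (hc : 0 ≤ c)
    (hw : ∀ y ∈ Icc (0:ℝ) 1, HasDerivWithinAt w (w' y) (Icc 0 1) y)
    (hw' : ∀ y ∈ Icc (0:ℝ) 1, HasDerivWithinAt w' (w'' y) (Icc 0 1) y)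
    (hsign : ∀ y ∈ Icc (0:ℝ) 1, 0 ≤ w y * w'' y) (h0 : w' 0 = 0) (h1 : w 1 + c * w' 1 = 0) :
    EqOn w 0 (Icc 0 1) := by
  have hW : MonotoneOn (fun y => w y * w' y) (Icc 0 1) :=
    monotoneOn_Icc_of_hasDerivWithinAt_nonneg (fun y hy => (hw y hy).mul (hw' y hy))
      fun y hy => add_nonneg (mul_self_nonneg _) (hsign y (Ioo_subset_Icc_self hy))
  have hW_nonneg : ∀ y ∈ Icc (0:ℝ) 1, 0 ≤ w y * w' y := fun y hy => by
    simpa [h0] using hW (left_mem_Icc.2 zero_le_one) hy hy.1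
  have hsq : MonotoneOn (fun y => w y ^ 2) (Icc 0 1) :=
    monotoneOn_Icc_of_hasDerivWithinAt_nonneg (fun y hy => (hw y hy).pow 2)
      fun y hy => by
        simp only [Nat.cast_ofNat, Nat.add_one_sub_one, pow_one, mul_assoc]
        exact mul_nonneg zero_le_two (hW_nonneg y (Ioo_subset_Icc_self hy))
  have hw1 : w 1 ^ 2 = 0 := by
    have := hW_nonneg 1 (right_mem_Icc.2 zero_le_one)
    have hw1 : w 1 = -(c * w' 1) := by linarith
    rw [hw1] at this ⊢
    nlinarith [mul_nonneg hc (sq_nonneg (w' 1))]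
  intro y hy
  have := hsq hy (right_mem_Icc.2 zero_le_one) hy.2
  simp only [hw1] at this
  exact pow_eq_zero_iff (n := 2) two_ne_zero |>.1 (le_antisymm this (sq_nonneg _))

theorem SolvesBVP.eqOn {κ κL L cstar h : ℝ} {r : ℝ → ℝ} {u₁ u₁' u₁'' u₂ u₂' u₂'' : ℝ → ℝ}
    (hκ : 0 < κ) (hκL : 0 ≤ κL) (hL : 0 ≤ L) (hh : 0 < h) (hr : Monotone r)
    (h₁ : SolvesBVP κ κL L cstar r h u₁ u₁' u₁'')
    (h₂ : SolvesBVP κ κL L cstar r h u₂ u₂' u₂'') :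
    EqOn u₁ u₂ (Icc 0 1) := by
  obtain ⟨hd₁, hd₁', -, heq₁, h0₁, h1₁⟩ := h₁
  obtain ⟨hd₂, hd₂', -, heq₂, h0₂, h1₂⟩ := h₂
  have hsign : ∀ y ∈ Icc (0:ℝ) 1, 0 ≤ (u₁ - u₂) y * (u₁'' - u₂'') y := fun y hy => by
    refine (mul_nonneg_iff_of_pos_left (by positivity : 0 < κ / h ^ 2)).1 ?_
    have := hr.mul_sub_nonneg (u₁ y) (u₂ y)
    rw [← heq₁ y hy, ← heq₂ y hy] at this
    simp only [Pi.sub_apply]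
    linarith
  have hw := eqOn_zero_of_mul_deriv2_nonneg (c := L * κ / (κL * h)) (by positivity)
    (fun y hy => (hd₁ y hy).sub (hd₂ y hy)) (fun y hy => (hd₁' y hy).sub (hd₂' y hy)) hsign
    (by simp [h0₁, h0₂]) (by simp only [Pi.sub_apply]; linarith)
  exact fun y hy => sub_eq_zero.1 (hw hy)

def secondOrderField (g : ℝ → ℝ) (v : ℝ × ℝ) : ℝ × ℝ := (v.2, g v.1)

theorem LipschitzWith.secondOrderField {g : ℝ → ℝ} {K : NNReal} (hg : LipschitzWith K g) :
    LipschitzWith (max 1 K) (secondOrderField g) :=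
  LipschitzWith.prod_snd.prodMk (mul_one K ▸ hg.comp LipschitzWith.prod_fst)

def IsShootingTrajectory (g : ℝ → ℝ) (a : ℝ) (f : ℝ → ℝ × ℝ) : Prop :=
  f 0 = (a, 0) ∧
    ∀ t ∈ Icc (0:ℝ) 1, HasDerivWithinAt f (secondOrderField g (f t)) (Icc 0 1) t

namespace IsShootingTrajectory

variable {g : ℝ → ℝ} {a : ℝ} {f : ℝ → ℝ × ℝ}

theorem exists_of_lipschitzWith {K C : NNReal} (hg : LipschitzWith K g)
    (hC : ∀ x, ‖g x‖ ≤ C) (a : ℝ) : ∃ f, IsShootingTrajectory g a f := by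
  have hbound : ∀ v ∈ Metric.closedBall ((a, 0) : ℝ × ℝ) C, ‖secondOrderField g v‖ ≤ C := by
    intro v hv
    have hv2 : ‖v.2‖ ≤ C := by
      simpa using (norm_snd_le (v - (a, 0))).trans (mem_closedBall_iff_norm.1 hv)
    exact max_le hv2 (hC v.1)
  have hPL : IsPicardLindelof (fun _ => secondOrderField g)
      (⟨0, left_mem_Icc.2 zero_le_one⟩ : Icc (0:ℝ) 1) (a, 0) C 0 C (max 1 K) :=
    .of_time_independent hbound hg.secondOrderField.lipschitzOnWith (by simp)
  exact hPL.exists_eq_forall_mem_Icc_hasDerivWithinAt₀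

theorem continuousOn (hf : IsShootingTrajectory g a f) : ContinuousOn f (Icc 0 1) :=
  fun t ht => (hf.2 t ht).continuousWithinAt

theorem hasDerivWithinAt_Ici (hf : IsShootingTrajectory g a f) :
    ∀ t ∈ Ico (0:ℝ) 1, HasDerivWithinAt f (secondOrderField g (f t)) (Ici t) t :=
  fun t ht => (hf.2 t (Ico_subset_Icc_self ht)).Ici_of_Icc ht

theorem hasDerivWithinAt_fst (hf : IsShootingTrajectory g a f) :
    ∀ t ∈ Icc (0:ℝ) 1, HasDerivWithinAt (fun s => (f s).1) (f t).2 (Icc 0 1) t :=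
  fun t ht => (ContinuousLinearMap.fst ℝ ℝ ℝ).hasFDerivAt.comp_hasDerivWithinAt t (hf.2 t ht)

theorem hasDerivWithinAt_snd (hf : IsShootingTrajectory g a f) :
    ∀ t ∈ Icc (0:ℝ) 1, HasDerivWithinAt (fun s => (f s).2) (g (f t).1) (Icc 0 1) t :=
  fun t ht => (ContinuousLinearMap.snd ℝ ℝ ℝ).hasFDerivAt.comp_hasDerivWithinAt t (hf.2 t ht)

theorem dist_le {K : NNReal} (hg : LipschitzWith K g) {b : ℝ} {f' : ℝ → ℝ × ℝ}
    (hf : IsShootingTrajectory g a f) (hf' : IsShootingTrajectory g b f') :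
    dist (f 1) (f' 1) ≤ Real.exp (max 1 K) * dist a b := by
  have h0 : dist (f 0) (f' 0) ≤ dist a b := by simp [hf.1, hf'.1, Prod.dist_eq]
  have := dist_le_of_trajectories_ODE (fun _ => hg.secondOrderField) hf.continuousOn
    hf.hasDerivWithinAt_Ici hf'.continuousOn hf'.hasDerivWithinAt_Ici h0 1
    (right_mem_Icc.2 zero_le_one)
  simpa [mul_comm] using this

theorem eqOn_zero {K : NNReal} (hg : LipschitzWith K g) (hg0 : g 0 = 0)
    (hf : IsShootingTrajectory g 0 f) : EqOn f 0 (Icc 0 1) := by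
  have hfield : secondOrderField g 0 = 0 := by simp [secondOrderField, hg0]
  have hzero : ∀ t ∈ Ico (0:ℝ) 1,
      HasDerivWithinAt (0 : ℝ → ℝ × ℝ) (secondOrderField g 0) (Ici t) t := fun t _ => by
    rw [hfield]
    exact hasDerivWithinAt_const t (Ici t) 0
  exact ODE_solution_unique (fun _ => hg.secondOrderField) hf.continuousOn
    hf.hasDerivWithinAt_Ici continuousOn_const hzero (by simp [hf.1])

theorem snd_nonneg (hg : ∀ x, 0 ≤ g x) (hf : IsShootingTrajectory g a f) :
    ∀ t ∈ Icc (0:ℝ) 1, 0 ≤ (f t).2 := fun t ht => by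
  simpa [hf.1] using monotoneOn_Icc_of_hasDerivWithinAt_nonneg hf.hasDerivWithinAt_snd
    (fun s _ => hg _) (left_mem_Icc.2 zero_le_one) ht ht.1

theorem monotoneOn_fst (hg : ∀ x, 0 ≤ g x) (hf : IsShootingTrajectory g a f) :
    MonotoneOn (fun t => (f t).1) (Icc 0 1) :=
  monotoneOn_Icc_of_hasDerivWithinAt_nonneg hf.hasDerivWithinAt_fst
    fun t ht => hf.snd_nonneg hg t (Ioo_subset_Icc_self ht)

theorem fst_mem_Icc (hg : ∀ x, 0 ≤ g x) (ha : 0 ≤ a) {b c : ℝ} (hc : 0 ≤ c)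
    (hf : IsShootingTrajectory g a f) (hf1 : (f 1).1 + c * (f 1).2 = b) :
    ∀ t ∈ Icc (0:ℝ) 1, (f t).1 ∈ Icc 0 b := fun t ht => by
  have hmono := hf.monotoneOn_fst hg
  have h0t : a ≤ (f t).1 := by simpa [hf.1] using hmono (left_mem_Icc.2 zero_le_one) ht ht.1
  have ht1 := hmono ht (right_mem_Icc.2 zero_le_one) ht.2
  have := mul_nonneg hc (hf.snd_nonneg hg 1 (right_mem_Icc.2 zero_le_one))
  exact ⟨ha.trans h0t, by simp only at ht1; linarith⟩

end IsShootingTrajectory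

theorem exists_isShootingTrajectory_robin {g : ℝ → ℝ} {K C : NNReal} {b c : ℝ}
    (hg : LipschitzWith K g) (hg0 : g 0 = 0) (hg_nonneg : ∀ x, 0 ≤ g x)
    (hC : ∀ x, ‖g x‖ ≤ C) (hb : 0 ≤ b) (hc : 0 ≤ c) :
    ∃ a ∈ Icc 0 b, ∃ f, IsShootingTrajectory g a f ∧ (f 1).1 + c * (f 1).2 = b := by
  choose sol hsol using IsShootingTrajectory.exists_of_lipschitzWith hg hC
  set Φ : ℝ → ℝ := fun a => (sol a 1).1 + c * (sol a 1).2
  have hsol_cont : Continuous fun a => sol a 1 :=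
    (LipschitzWith.of_dist_le' fun a b => (hsol a).dist_le hg (hsol b)).continuous
  have hΦ : Continuous Φ :=
    (continuous_fst.comp hsol_cont).add (continuous_const.mul (continuous_snd.comp hsol_cont))
  have hΦ0 : Φ 0 = 0 := by
    simp [Φ, (hsol 0).eqOn_zero hg hg0 (right_mem_Icc.2 zero_le_one)]
  have hΦb : b ≤ Φ b := by
    have h1 : b ≤ (sol b 1).1 := by
      simpa [(hsol b).1] using (hsol b).monotoneOn_fst hg_nonneg (left_mem_Icc.2 zero_le_one)
        (right_mem_Icc.2 zero_le_one) zero_le_one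
    have h2 := mul_nonneg hc ((hsol b).snd_nonneg hg_nonneg 1 (right_mem_Icc.2 zero_le_one))
    linarith
  obtain ⟨a, ha, hΦa⟩ := intermediate_value_Icc hb hΦ.continuousOn ⟨hΦ0.symm ▸ hb, hΦb⟩
  exact ⟨a, ha, sol a, hsol a, hΦa⟩

/-- Truncating `ρ` outside `[0, b]` gives a globally Lipschitz, bounded field; the shooting
solution stays in `[0, b]`, where the truncation is invisible. -/
theorem exists_neumann_robin_solution {ρ : ℝ → ℝ} {K : NNReal} {b c : ℝ} (hρ : Monotone ρ)
    (hρ0 : ρ 0 = 0) (hρK : LipschitzOnWith K ρ (Icc 0 b)) (hb : 0 ≤ b) (hc : 0 ≤ c) :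
    ∃ u u' : ℝ → ℝ, (∀ y ∈ Icc (0:ℝ) 1, HasDerivWithinAt u (u' y) (Icc 0 1) y) ∧
      (∀ y ∈ Icc (0:ℝ) 1, HasDerivWithinAt u' (ρ (u y)) (Icc 0 1) y) ∧
      u' 0 = 0 ∧ u 1 + c * u' 1 = b := by
  set g := IccExtend hb fun x : Icc 0 b => ρ x
  have hg : LipschitzWith (K * 1) g := hρK.to_restrict.comp (LipschitzWith.projIcc hb)
  have hg_mem : ∀ x, g x ∈ Icc 0 (ρ b) := fun x =>
    ⟨hρ0 ▸ hρ (projIcc 0 b hb x).2.1, hρ (projIcc 0 b hb x).2.2⟩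
  have hg0 : g 0 = 0 := (IccExtend_left hb _).trans hρ0
  have hC : ∀ x, ‖g x‖ ≤ (ρ b).toNNReal := fun x => by
    rw [Real.norm_of_nonneg (hg_mem x).1]
    exact (hg_mem x).2.trans (Real.le_coe_toNNReal _)
  obtain ⟨a, ha, f, hf, hf1⟩ :=
    exists_isShootingTrajectory_robin hg hg0 (fun x => (hg_mem x).1) hC hb hc
  have hfg : ∀ t ∈ Icc (0:ℝ) 1, g (f t).1 = ρ (f t).1 := fun t ht =>
    IccExtend_of_mem hb _ (hf.fst_mem_Icc (fun x => (hg_mem x).1) ha.1 hc hf1 t ht)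
  exact ⟨fun t => (f t).1, fun t => (f t).2, hf.hasDerivWithinAt_fst,
    fun t ht => hfg t ht ▸ hf.hasDerivWithinAt_snd t ht, by simp [hf.1], hf1⟩

theorem exists_solvesBVP {κ κL L cstar h : ℝ} {r : ℝ → ℝ} (hκ : 0 < κ) (hκL : 0 ≤ κL)
    (hL : 0 ≤ L) (hc : 0 ≤ cstar) (hh : 0 < h) (hr : ContDiff ℝ 1 r) (hr_mono : Monotone r)
    (hr0 : r 0 = 0) : ∃ u u' u'' : ℝ → ℝ, SolvesBVP κ κL L cstar r h u u' u'' := by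
  have hρ : ContDiff ℝ 1 fun s => h ^ 2 / κ * r s := contDiff_const.mul hr
  obtain ⟨K, hK⟩ :=
    hρ.contDiffOn.exists_lipschitzOnWith one_ne_zero (convex_Icc 0 cstar) isCompact_Icc
  obtain ⟨u, u', hu, hu', h0, h1⟩ := exists_neumann_robin_solution
    (hr_mono.const_mul (by positivity)) (by simp [hr0]) hK hc
    (by positivity : 0 ≤ L * κ / (κL * h))
  refine ⟨u, u', fun y => h ^ 2 / κ * r (u y), hu, hu', ?_, fun y _ => by field_simp, h0, h1⟩
  exact hρ.continuous.comp_continuousOn fun y hy => (hu y hy).continuousWithinAt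

theorem existence_uniqueness_BVP
    (κ κL L cstar : ℝ) (hκ : 0 < κ) (hκL : 0 < κL) (hL : 0 < L) (hc : 0 < cstar)
    (r : ℝ → ℝ) (hr : ContDiff ℝ 1 r) (hrsign : ∀ s : ℝ, s ≠ 0 → s * r s > 0)
    (hr' : ∀ s : ℝ, 0 ≤ deriv r s)
    (h : ℝ) (hh : 0 < h) :
    (∃ u u' u'' : ℝ → ℝ, SolvesBVP κ κL L cstar r h u u' u'') ∧
    (∀ u₁ u₁' u₁'' u₂ u₂' u₂'' : ℝ → ℝ,
      SolvesBVP κ κL L cstar r h u₁ u₁' u₁'' →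
      SolvesBVP κ κL L cstar r h u₂ u₂' u₂'' →
      EqOn u₁ u₂ (Icc (0:ℝ) 1)) := by
  have hr_mono : Monotone r := monotone_of_deriv_nonneg (hr.differentiable one_ne_zero) hr'
  exact ⟨exists_solvesBVP hκ hκL.le hL.le hc.le hh hr hr_mono
      (hr.continuous.apply_zero_eq_zero_of_mul_pos hrsign),
    fun _ _ _ _ _ _ h₁ h₂ => h₁.eqOn hκ hκL.le hL.le hh hr_mono h₂⟩
end

section
/- Let h > 0 and let q : [0,1] → ℝ be continuous with q(y) ≥ 0 for all y ∈ [0,1]. If φ : [0,1] → ℝ is twice continuously differentiable on [0,1] and satisfies (κ/h²)·φ''(y) = q(y)·φ(y) for all y ∈ [0,1], φ'(0) = 0, and φ(1) + (L·κ/(κ_L·h))·φ'(1) = 0, then φ(y) = 0 for all y ∈ [0,1]. -/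
/-!
Multiplying the equation by `φ` and integrating by parts gives the energy identity
`∫₀¹ φ'² = φ(1) φ'(1) - φ(0) φ'(0) - ∫₀¹ φ φ''`. Here `φ φ'' = (h² / κ) q φ² ≥ 0`, the Neumann
condition kills the term at `0`, and the Robin condition turns the term at `1` into
`-(L κ / (κ_L h)) φ'(1)² ≤ 0`. Hence `φ' ≡ 0`, so `φ` is constant, and `φ(1) = 0` by the Robin
condition once `φ'(1) = 0`.
-/

open Set intervalIntegral

theorem derivative_eq_zero_of_mul_second_derivative_nonneg {a b : ℝ} (hab : a < b)
    {f f' f'' : ℝ → ℝ}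
    (hf : ∀ x ∈ Icc a b, HasDerivWithinAt f (f' x) (Icc a b) x)
    (hf' : ∀ x ∈ Icc a b, HasDerivWithinAt f' (f'' x) (Icc a b) x)
    (hf''c : ContinuousOn f'' (Icc a b))
    (hnonneg : ∀ x ∈ Icc a b, 0 ≤ f x * f'' x)
    (hboundary : f b * f' b ≤ f a * f' a) :
    ∀ x ∈ Icc a b, f' x = 0 := by
  have hf'c : ContinuousOn f' (Icc a b) := fun x hx => (hf' x hx).continuousWithinAt
  have hIcc : uIcc a b = Icc a b := uIcc_of_le hab.le
  have hparts : ∫ x in a..b, f x * f'' x = f b * f' b - f a * f' a - ∫ x in a..b, f' x * f' x :=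
    integral_mul_deriv_eq_deriv_mul_of_hasDerivWithinAt (hIcc ▸ hf) (hIcc ▸ hf')
      (hf'c.intervalIntegrable_of_Icc hab.le) (hf''c.intervalIntegrable_of_Icc hab.le)
  have henergy : ∫ x in a..b, f' x * f' x ≤ 0 := by
    have hsource : 0 ≤ ∫ x in a..b, f x * f'' x := integral_nonneg hab.le hnonneg
    linarith
  intro x hx
  by_contra hne
  have hpos : 0 < ∫ x in a..b, f' x * f' x :=
    integral_pos hab (hf'c.mul hf'c) (fun y _ => mul_self_nonneg (f' y))
      ⟨x, hx, mul_self_pos.mpr hne⟩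
  linarith

theorem linear_homogeneous_BVP_trivial_general
    (κ κL L : ℝ) (hκ : 0 < κ) (hκL : 0 < κL) (hL : 0 < L)
    (h : ℝ) (hh : 0 < h)
    (q : ℝ → ℝ)
    (hq : ∀ y ∈ Icc (0:ℝ) 1, 0 ≤ q y)
    (φ φ' φ'' : ℝ → ℝ)
    (hφ1 : ∀ y ∈ Icc (0:ℝ) 1, HasDerivWithinAt φ (φ' y) (Icc (0:ℝ) 1) y)
    (hφ2 : ∀ y ∈ Icc (0:ℝ) 1, HasDerivWithinAt φ' (φ'' y) (Icc (0:ℝ) 1) y)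
    (hφ2c : ContinuousOn φ'' (Icc (0:ℝ) 1))
    (hode : ∀ y ∈ Icc (0:ℝ) 1, (κ / h ^ 2) * φ'' y = q y * φ y)
    (hb0 : φ' 0 = 0)
    (hb1 : φ 1 + (L * κ / (κL * h)) * φ' 1 = 0) :
    ∀ y ∈ Icc (0:ℝ) 1, φ y = 0 := by
  have hcoeff : 0 < κ / h ^ 2 := by positivity
  have hrobin : 0 < L * κ / (κL * h) := by positivity
  have hnonneg : ∀ y ∈ Icc (0:ℝ) 1, 0 ≤ φ y * φ'' y := fun y hy => by
    have hscaled : κ / h ^ 2 * (φ y * φ'' y) = q y * φ y ^ 2 := by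
      linear_combination φ y * hode y hy
    exact nonneg_of_mul_nonneg_right (hscaled ▸ mul_nonneg (hq y hy) (sq_nonneg _)) hcoeff
  have hboundary : φ 1 * φ' 1 ≤ φ 0 * φ' 0 := by
    have hflux : φ 1 * φ' 1 = -(L * κ / (κL * h)) * φ' 1 ^ 2 := by
      linear_combination φ' 1 * hb1
    rw [hflux, hb0, mul_zero]
    nlinarith [sq_nonneg (φ' 1)]
  have hφ'0 := derivative_eq_zero_of_mul_second_derivative_nonneg zero_lt_one hφ1 hφ2 hφ2c
    hnonneg hboundary
  have hφ_one : φ 1 = 0 := by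
    simpa [hφ'0 1 (right_mem_Icc.mpr zero_le_one)] using hb1
  have hconst := norm_image_sub_le_of_norm_deriv_le_segment' hφ1
    (fun x hx => (norm_eq_zero.mpr (hφ'0 x (Ico_subset_Icc_self hx))).le)
  intro y hy
  have hy0 := hconst y hy
  have h10 := hconst 1 (right_mem_Icc.mpr zero_le_one)
  rw [zero_mul, norm_le_zero_iff, sub_eq_zero] at hy0 h10
  rw [hy0, ← h10, hφ_one]

theorem linear_homogeneous_BVP_trivial
    (κ κL L : ℝ) (hκ : 0 < κ) (hκL : 0 < κL) (hL : 0 < L)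
    (h : ℝ) (hh : 0 < h)
    (q : ℝ → ℝ) (hqc : ContinuousOn q (Icc (0:ℝ) 1))
    (hq : ∀ y ∈ Icc (0:ℝ) 1, 0 ≤ q y)
    (φ φ' φ'' : ℝ → ℝ)
    (hφ1 : ∀ y ∈ Icc (0:ℝ) 1, HasDerivWithinAt φ (φ' y) (Icc (0:ℝ) 1) y)
    (hφ2 : ∀ y ∈ Icc (0:ℝ) 1, HasDerivWithinAt φ' (φ'' y) (Icc (0:ℝ) 1) y)
    (hφ2c : ContinuousOn φ'' (Icc (0:ℝ) 1))
    (hode : ∀ y ∈ Icc (0:ℝ) 1, (κ / h ^ 2) * φ'' y = q y * φ y)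
    (hb0 : φ' 0 = 0)
    (hb1 : φ 1 + (L * κ / (κL * h)) * φ' 1 = 0) :
    ∀ y ∈ Icc (0:ℝ) 1, φ y = 0 :=
  linear_homogeneous_BVP_trivial_general κ κL L hκ hκL hL h hh q hq φ φ' φ'' hφ1 hφ2 hφ2c hode hb0
    hb1
end

section
/- Let h > 0 and let u solve BVP(h). Then u(0) ≥ c_* − (L·h/κ_L)·r(c_*) − (h²/κ)·r(c_*). -/
open Set MeasureTheory intervalIntegral Filter

open Topology

/-!
By a maximum principle `u ≤ c_*`: at a maximum above `c_* > 0` we would have `r(u) > 0`, hence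
`u'' > 0`; together with `u' = 0` there (Fermat, or the Neumann condition at `0`) this excludes a
maximum in `[0,1)`, and at `1` the Robin condition would force `u'(1) < 0`. Monotonicity of `r`
then gives `u'' ≤ C := (h²/κ) r(c_*)`, so `u'(y) ≤ C y` and `u(1) - u(0) ≤ C`, and the Robin
condition turns `u'(1) ≤ C` into `u(1) ≥ c_* - (L h/κ_L) r(c_*)`.
-/

theorem HasDerivWithinAt.eventually_lt_right_of_pos {f : ℝ → ℝ} {f' x : ℝ}
    (hf : HasDerivWithinAt f f' (Ici x) x) (hf' : 0 < f') : ∀ᶠ y in 𝓝[>] x, f x < f y := by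
  have hslope : Tendsto (slope f x) (𝓝[>] x) (𝓝 f') := by
    simpa only [Ici_sdiff_left] using hasDerivWithinAt_iff_tendsto_slope.1 hf
  filter_upwards [hslope.eventually (eventually_gt_nhds hf'), self_mem_nhdsWithin] with y hy hxy
  rw [slope_def_field, div_pos_iff_of_pos_right (sub_pos.2 hxy)] at hy
  exact sub_pos.1 hy

theorem HasDerivWithinAt.eventually_lt_left_of_neg {f : ℝ → ℝ} {f' x : ℝ}
    (hf : HasDerivWithinAt f f' (Iic x) x) (hf' : f' < 0) : ∀ᶠ y in 𝓝[<] x, f x < f y := by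
  have hslope : Tendsto (slope f x) (𝓝[<] x) (𝓝 f') := by
    simpa only [Iic_sdiff_right] using hasDerivWithinAt_iff_tendsto_slope.1 hf
  filter_upwards [hslope.eventually (eventually_lt_nhds hf'), self_mem_nhdsWithin] with y hy hyx
  rw [slope_def_field, div_lt_iff_of_neg (sub_neg.2 hyx), zero_mul] at hy
  exact sub_pos.1 hy

theorem not_isMaxOn_Icc_right_of_hasDerivWithinAt_neg {f : ℝ → ℝ} {f' a b : ℝ} (hab : a < b)
    (hf : HasDerivWithinAt f f' (Icc a b) b) (hf' : f' < 0) : ¬IsMaxOn f (Icc a b) b := by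
  intro hmax
  have hf_left : HasDerivWithinAt f f' (Iic b) b :=
    hf.mono_of_mem_nhdsWithin (Icc_mem_nhdsLE hab)
  obtain ⟨y, hfy, hy⟩ :=
    ((hf_left.eventually_lt_left_of_neg hf').and (Ioo_mem_nhdsLT hab)).exists
  exact (hmax (Ioo_subset_Icc_self hy)).not_gt hfy

theorem not_isMaxOn_Icc_of_deriv_nonneg_of_secondDeriv_pos {f f' : ℝ → ℝ} {f'' a b x : ℝ}
    (hx : x ∈ Ico a b) (hf : ∀ y ∈ Icc a b, HasDerivWithinAt f (f' y) (Icc a b) y)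
    (hf'x : HasDerivWithinAt f' f'' (Icc a b) x) (hf'x_nonneg : 0 ≤ f' x) (hf'' : 0 < f'') :
    ¬IsMaxOn f (Icc a b) x := by
  intro hmax
  have hf'_right : HasDerivWithinAt f' f'' (Ici x) x :=
    hf'x.mono_of_mem_nhdsWithin (Icc_mem_nhdsGE_of_mem hx)
  obtain ⟨c, hxc, hc⟩ := mem_nhdsGT_iff_exists_Ioo_subset.1
    ((hf'_right.eventually_lt_right_of_pos hf'').and (Ioo_mem_nhdsGT_of_mem hx))
  have hsub : Ioo x c ⊆ Ioo a b := fun z hz => (hc hz).2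
  obtain ⟨y, hy⟩ := nonempty_Ioo.2 (mem_Ioi.1 hxc)
  have hyab : y ∈ Icc a b := Ioo_subset_Icc_self (hsub hy)
  have hcont : ContinuousOn f (Icc a b) := fun t ht => (hf t ht).continuousWithinAt
  obtain ⟨z, hz, hfz⟩ := exists_hasDerivAt_eq_slope f f' hy.1
    (hcont.mono (Icc_subset_Icc hx.1 hyab.2))
    fun t ht =>
      have ht' : t ∈ Ioo a b := hsub ⟨ht.1, ht.2.trans hy.2⟩
      (hf t (Ioo_subset_Icc_self ht')).hasDerivAt (Icc_mem_nhds ht'.1 ht'.2)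
  have hslope_pos : 0 < (f y - f x) / (y - x) :=
    hfz ▸ hf'x_nonneg.trans_lt (hc ⟨hz.1, hz.2.trans hy.2⟩).1
  rw [div_pos_iff_of_pos_right (sub_pos.2 hy.1)] at hslope_pos
  exact (hmax hyab).not_gt (sub_pos.1 hslope_pos)

theorem image_sub_le_mul_sub_of_hasDerivWithinAt_le {f f' : ℝ → ℝ} {a b C : ℝ}
    (hf : ∀ x ∈ Icc a b, HasDerivWithinAt f (f' x) (Icc a b) x) (hle : ∀ x ∈ Ioo a b, f' x ≤ C) :
    ∀ x ∈ Icc a b, f x - f a ≤ C * (x - a) := by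
  have hmono : MonotoneOn (fun x => C * x - f x) (Icc a b) := by
    refine monotoneOn_of_hasDerivWithinAt_nonneg (f' := fun x => C * 1 - f' x) (convex_Icc a b)
      (fun x hx => (continuousWithinAt_id.const_mul C).sub (hf x hx).continuousWithinAt)
      ?_ ?_ <;> rw [interior_Icc] <;> intro x hx
    · exact ((hasDerivWithinAt_id x _).const_mul C).sub
        ((hf x (Ioo_subset_Icc_self hx)).mono Ioo_subset_Icc_self)
    · linarith [hle x hx]
  intro x hx
  linarith [hmono (left_mem_Icc.2 (hx.1.trans hx.2)) hx hx.1]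

namespace SolvesBVP

variable {κ κL L cstar h : ℝ} {r : ℝ → ℝ} {u u' u'' : ℝ → ℝ}

theorem secondDeriv_eq (hu : SolvesBVP κ κL L cstar r h u u' u'') (hκ : κ ≠ 0) (hh : h ≠ 0) :
    ∀ y ∈ Icc (0:ℝ) 1, u'' y = h ^ 2 / κ * r (u y) := by
  obtain ⟨-, -, -, hode, -, -⟩ := hu
  intro y hy
  rw [← hode y hy]
  field_simp

theorem le_cstar (hu : SolvesBVP κ κL L cstar r h u u' u'') (hκ : 0 < κ) (hκL : 0 < κL)
    (hL : 0 < L) (hh : 0 < h) (hc : 0 < cstar) (hr : ∀ s, 0 < s → 0 < r s) :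
    ∀ y ∈ Icc (0:ℝ) 1, u y ≤ cstar := by
  have hode := hu.secondDeriv_eq hκ.ne' hh.ne'
  obtain ⟨hu', hu'', -, -, hu'0, hbc⟩ := hu
  by_contra! ⟨z, hz, hzc⟩
  obtain ⟨y₀, hy₀, hmax⟩ := isCompact_Icc.exists_isMaxOn (nonempty_Icc.2 zero_le_one)
    fun y hy => (hu' y hy).continuousWithinAt
  have hy₀c : cstar < u y₀ := hzc.trans_le (hmax hz)
  rcases hy₀.2.eq_or_lt with rfl | hy₀1
  · refine not_isMaxOn_Icc_right_of_hasDerivWithinAt_neg zero_lt_one (hu' 1 hy₀) ?_ hmax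
    have hβ : 0 < L * κ / (κL * h) := by positivity
    exact neg_of_mul_neg_right (by linarith) hβ.le
  · refine not_isMaxOn_Icc_of_deriv_nonneg_of_secondDeriv_pos ⟨hy₀.1, hy₀1⟩ hu' (hu'' y₀ hy₀)
      ?_ ?_ hmax
    · rcases hy₀.1.eq_or_lt with rfl | hy₀0
      · exact hu'0.ge
      · exact ((hmax.isLocalMax (Icc_mem_nhds hy₀0 hy₀1)).hasDerivAt_eq_zero
          ((hu' y₀ hy₀).hasDerivAt (Icc_mem_nhds hy₀0 hy₀1))).ge
    · rw [hode y₀ hy₀]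
      exact mul_pos (by positivity) (hr _ (hc.trans hy₀c))

theorem deriv_le (hu : SolvesBVP κ κL L cstar r h u u' u'') (hκ : 0 < κ) (hh : 0 < h)
    (hr : Monotone r) (hle : ∀ y ∈ Icc (0:ℝ) 1, u y ≤ cstar) :
    ∀ y ∈ Icc (0:ℝ) 1, u' y ≤ h ^ 2 / κ * r cstar * y := by
  have hode := hu.secondDeriv_eq hκ.ne' hh.ne'
  obtain ⟨-, hu'', -, -, hu'0, -⟩ := hu
  intro y hy
  have hsub : Icc 0 y ⊆ Icc 0 1 := Icc_subset_Icc_right hy.2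
  have hu''_le : ∀ x ∈ Ioo 0 y, u'' x ≤ h ^ 2 / κ * r cstar := fun x hx => by
    have hx01 : x ∈ Icc (0:ℝ) 1 := hsub (Ioo_subset_Icc_self hx)
    rw [hode x hx01]
    gcongr
    exact hr (hle x hx01)
  simpa [hu'0] using image_sub_le_mul_sub_of_hasDerivWithinAt_le
    (fun x hx => (hu'' x (hsub hx)).mono hsub) hu''_le y (right_mem_Icc.2 hy.1)

theorem lower_bound_at_zero (hu : SolvesBVP κ κL L cstar r h u u' u'') (hκ : 0 < κ)
    (hκL : 0 < κL) (hL : 0 < L) (hh : 0 < h) (hc : 0 < cstar) (hr_mono : Monotone r)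
    (hr_pos : ∀ s, 0 < s → 0 < r s) :
    cstar - L * h / κL * r cstar - h ^ 2 / κ * r cstar ≤ u 0 := by
  set C := h ^ 2 / κ * r cstar
  have hC : 0 ≤ C := by have := hr_pos cstar hc; positivity
  have hu'_le := hu.deriv_le hκ hh hr_mono (hu.le_cstar hκ hκL hL hh hc hr_pos)
  obtain ⟨hu', -, -, -, -, hbc⟩ := hu
  have hu'1 : u' 1 ≤ C := by simpa using hu'_le 1 (right_mem_Icc.2 zero_le_one)
  have hrise : u 1 - u 0 ≤ C := by
    simpa using image_sub_le_mul_sub_of_hasDerivWithinAt_le hu'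
      (fun x hx => (hu'_le x (Ioo_subset_Icc_self hx)).trans (mul_le_of_le_one_right hC hx.2.le))
      1 (right_mem_Icc.2 zero_le_one)
  have hβ : 0 ≤ L * κ / (κL * h) := by positivity
  have hβC : L * κ / (κL * h) * C = L * h / κL * r cstar := by
    simp only [C]; field_simp
  calc cstar - L * h / κL * r cstar - h ^ 2 / κ * r cstar
      = u 1 + L * κ / (κL * h) * (u' 1 - C) - C := by rw [← hβC]; linear_combination -hbc
    _ ≤ u 1 - C := by linarith [mul_le_mul_of_nonneg_left hu'1 hβ]
    _ ≤ u 0 := by linarith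

end SolvesBVP

theorem BVP_lower_bound_at_zero
    (κ κL L cstar : ℝ) (hκ : 0 < κ) (hκL : 0 < κL) (hL : 0 < L) (hc : 0 < cstar)
    (r : ℝ → ℝ) (hr : ContDiff ℝ 1 r) (hrsign : ∀ s : ℝ, s ≠ 0 → s * r s > 0)
    (hr' : ∀ s : ℝ, 0 ≤ deriv r s)
    (h : ℝ) (hh : 0 < h) (u u' u'' : ℝ → ℝ)
    (hu : SolvesBVP κ κL L cstar r h u u' u'') :
    u 0 ≥ cstar - (L * h / κL) * r cstar - (h ^ 2 / κ) * r cstar :=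
  hu.lower_bound_at_zero hκ hκL hL hh hc
    (monotone_of_deriv_nonneg (hr.differentiable one_ne_zero) hr')
    fun s hs => pos_of_mul_pos_right (hrsign s hs.ne') hs.le
end

section
/- Let (c, h) be a classical solution of the moving boundary problem on [0,∞) with r'(s) ≥ 0 for all s and 0 ≤ c(t,z) ≤ c_* for all t ≥ 0, z ∈ [0, h(t)], with Lipschitz initial datum c₀ on [0, h(0)], and assume the spatial derivative d(t,z) := ∂_z c(t,z) is continuous on the closed moving domain and is itself a classical solution of ∂_t d = κ·∂_z² d − r'(c)·d on 0 < z < h(t). Then, with M := max{ sup_{z∈[0,h(0)]} |c₀'(z)|, c_*·κ_L/(κ·L) }, one has |∂_z c(t,z)| ≤ M for all t ≥ 0 and z ∈ [0, h(t)]. If moreover c₀ is nondecreasing, then 0 ≤ ∂_z c(t,z) ≤ M for all t ≥ 0 and z ∈ [0, h(t)]. -/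
open Set MeasureTheory intervalIntegral Filter Topology

/-- Parabolic maximum principle on a moving domain with nonnegative zero-order coefficient. -/
lemma parab_max_principle {κ : ℝ} (hκ : 0 < κ) (T : ℝ) (hT : 0 ≤ T)
    (h : ℝ → ℝ) (hh : ContinuousOn h (Ici 0))
    (u ut uz uzz q : ℝ → ℝ → ℝ)
    (hu : ContinuousOn (fun p : ℝ × ℝ => u p.1 p.2)
      {p : ℝ × ℝ | p.1 ∈ Icc 0 T ∧ p.2 ∈ Icc 0 (h p.1)})
    (hq : ∀ t ∈ Ioi (0:ℝ), ∀ z ∈ Ioo 0 (h t), 0 ≤ q t z)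
    (hut : ∀ t ∈ Ioi (0:ℝ), ∀ z ∈ Ioo 0 (h t), HasDerivAt (fun s => u s z) (ut t z) t)
    (huz : ∀ t ∈ Ioi (0:ℝ), ∀ z ∈ Ioo 0 (h t), HasDerivAt (fun w => u t w) (uz t z) z)
    (huzz : ∀ t ∈ Ioi (0:ℝ), ∀ z ∈ Ioo 0 (h t), HasDerivAt (fun w => uz t w) (uzz t z) z)
    (hPDE : ∀ t ∈ Ioi (0:ℝ), ∀ z ∈ Ioo 0 (h t), ut t z = κ * uzz t z - q t z * u t z)
    (B : ℝ) (hB : 0 ≤ B)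
    (hinit : ∀ z ∈ Icc 0 (h 0), u 0 z ≤ B)
    (hb0 : ∀ t ∈ Icc 0 T, u t 0 ≤ B)
    (hb1 : ∀ t ∈ Icc 0 T, u t (h t) ≤ B) :
    ∀ t ∈ Icc 0 T, ∀ z ∈ Icc 0 (h t), u t z ≤ B := by
  by_contra hcon
  push_neg at hcon
  obtain ⟨t₁, ht₁, z₁, hz₁, hgt⟩ := hcon
  set Q : Set (ℝ × ℝ) := {p : ℝ × ℝ | p.1 ∈ Icc 0 T ∧ p.2 ∈ Icc 0 (h p.1)} with hQdef
  -- Q is compact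
  have hhT : ContinuousOn h (Icc 0 T) := hh.mono (Icc_subset_Ici_self)
  obtain ⟨tm, htm, htmax⟩ : ∃ tm ∈ Icc (0:ℝ) T, ∀ t ∈ Icc (0:ℝ) T, h t ≤ h tm := by
    obtain ⟨tm, htm, hmax⟩ := isCompact_Icc.exists_isMaxOn (nonempty_Icc.2 hT) hhT
    exact ⟨tm, htm, fun t ht => hmax ht⟩
  have hQsub : Q ⊆ Icc 0 T ×ˢ Icc 0 (h tm) := by
    rintro ⟨t, z⟩ ⟨ht, hz⟩
    exact ⟨ht, hz.1, hz.2.trans (htmax t ht)⟩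
  have hK : IsCompact (Icc (0:ℝ) T ×ˢ Icc (0:ℝ) (h tm)) := isCompact_Icc.prod isCompact_Icc
  have hFcont : ContinuousOn (fun p : ℝ × ℝ => h p.1 - p.2) (Icc 0 T ×ˢ Icc 0 (h tm)) := by
    apply ContinuousOn.sub
    · exact hhT.comp continuous_fst.continuousOn (fun p hp => hp.1)
    · exact continuous_snd.continuousOn
  have hQclosed : IsClosed Q := by
    have h1 : IsClosed ((Icc (0:ℝ) T ×ˢ Icc (0:ℝ) (h tm)) ∩
        (fun p : ℝ × ℝ => h p.1 - p.2) ⁻¹' Ici 0) :=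
      hFcont.preimage_isClosed_of_isClosed (isClosed_Icc.prod isClosed_Icc) isClosed_Ici
    have : Q = (Icc (0:ℝ) T ×ˢ Icc (0:ℝ) (h tm)) ∩
        (fun p : ℝ × ℝ => h p.1 - p.2) ⁻¹' Ici 0 := by
      ext ⟨t, z⟩
      constructor
      · rintro ⟨ht, hz⟩
        exact ⟨hQsub ⟨ht, hz⟩, by simpa using hz.2⟩
      · rintro ⟨⟨ht, hz⟩, hF⟩
        exact ⟨ht, hz.1, by simpa using hF⟩
    rw [this]; exact h1
  have hQcomp : IsCompact Q := hK.of_isClosed_subset hQclosed hQsub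
  have hp₁ : (t₁, z₁) ∈ Q := ⟨ht₁, hz₁⟩
  -- the perturbation
  set δ : ℝ := u t₁ z₁ - B with hδdef
  have hδ : 0 < δ := sub_pos.2 hgt
  set ε : ℝ := δ / (2 * (T + 1)) with hεdef
  have hε : 0 < ε := div_pos hδ (by linarith)
  have hεT : ε * T < δ := by
    have h1 : ε * (2 * (T + 1)) = δ := div_mul_cancel₀ _ (by positivity)
    nlinarith
  set v : ℝ × ℝ → ℝ := fun p => u p.1 p.2 - ε * p.1 with hvdef
  have hvcont : ContinuousOn v Q := by
    exact hu.sub ((continuous_const.mul continuous_fst).continuousOn)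
  obtain ⟨p₀, hp₀Q, hp₀max⟩ := hQcomp.exists_isMaxOn ⟨(t₁, z₁), hp₁⟩ hvcont
  obtain ⟨t₀, z₀⟩ := p₀
  have ht₀Q : t₀ ∈ Icc (0:ℝ) T := hp₀Q.1
  have hz₀Q : z₀ ∈ Icc (0:ℝ) (h t₀) := hp₀Q.2
  have hvmax : ∀ p ∈ Q, v p ≤ v (t₀, z₀) := fun p hp => hp₀max hp
  have hvB : B < v (t₀, z₀) := by
    have h1 : v (t₁, z₁) ≤ v (t₀, z₀) := hvmax _ hp₁
    have h2 : ε * t₁ ≤ ε * T := by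
      apply mul_le_mul_of_nonneg_left ht₁.2 hε.le
    have h3 : v (t₁, z₁) = u t₁ z₁ - ε * t₁ := rfl
    nlinarith
  have huB : B < u t₀ z₀ := by
    have : v (t₀, z₀) = u t₀ z₀ - ε * t₀ := rfl
    nlinarith [mul_nonneg hε.le ht₀Q.1]
  -- t₀ > 0
  have ht₀pos : 0 < t₀ := by
    rcases ht₀Q.1.lt_or_eq with h1 | h1
    · exact h1
    · exfalso
      have : v (t₀, z₀) = u 0 z₀ := by simp [hvdef, ← h1]
      rw [this] at hvB
      have := hinit z₀ (by rwa [← h1] at hz₀Q)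
      linarith
  -- z₀ ∈ Ioo 0 (h t₀)
  have hz₀pos : 0 < z₀ := by
    rcases hz₀Q.1.lt_or_eq with h1 | h1
    · exact h1
    · exfalso
      have : v (t₀, z₀) = u t₀ 0 - ε * t₀ := by rw [← h1]
      have h2 := hb0 t₀ ht₀Q
      nlinarith [mul_nonneg hε.le ht₀Q.1]
  have hz₀lt : z₀ < h t₀ := by
    rcases hz₀Q.2.lt_or_eq with h1 | h1
    · exact h1
    · exfalso
      have : v (t₀, z₀) = u t₀ (h t₀) - ε * t₀ := by rw [h1]
      have h2 := hb1 t₀ ht₀Q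
      nlinarith [mul_nonneg hε.le ht₀Q.1]
  have hz₀mem : z₀ ∈ Ioo (0:ℝ) (h t₀) := ⟨hz₀pos, hz₀lt⟩
  have ht₀mem : t₀ ∈ Ioi (0:ℝ) := ht₀pos
  -- spatial max: f := u t₀ attains its max over [0, h t₀] at z₀
  set f : ℝ → ℝ := fun w => u t₀ w with hfdef
  have hfmax : ∀ w ∈ Icc (0:ℝ) (h t₀), f w ≤ f z₀ := by
    intro w hw
    have := hvmax (t₀, w) ⟨ht₀Q, hw⟩
    simpa [hvdef] using this
  have hfcont : ContinuousOn f (Icc (0:ℝ) (h t₀)) := by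
    have : ContinuousOn (fun w => (fun p : ℝ × ℝ => u p.1 p.2) (t₀, w)) (Icc 0 (h t₀)) := by
      apply hu.comp (Continuous.continuousOn (continuous_const.prodMk continuous_id))
      intro w hw; exact ⟨ht₀Q, hw⟩
    exact this
  -- uz t₀ z₀ = 0
  have hlocmax : IsLocalMax f z₀ := by
    have hnb : Icc (0:ℝ) (h t₀) ∈ 𝓝 z₀ :=
      mem_of_superset (Ioo_mem_nhds hz₀pos hz₀lt) Ioo_subset_Icc_self
    exact eventually_of_mem hnb hfmax
  have huz0 : uz t₀ z₀ = 0 :=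
    hlocmax.hasDerivAt_eq_zero (huz t₀ ht₀mem z₀ hz₀mem)
  -- uzz t₀ z₀ ≤ 0
  have huzz0 : uzz t₀ z₀ ≤ 0 := by
    by_contra hpos'
    push_neg at hpos'
    -- uz is positive just to the right of z₀
    have hslope : Tendsto (slope (fun w => uz t₀ w) z₀) (𝓝[>] z₀) (𝓝 (uzz t₀ z₀)) :=
      (hasDerivAt_iff_tendsto_slope.1 (huzz t₀ ht₀mem z₀ hz₀mem)).mono_left
        (nhdsWithin_mono _ (fun x hx => ne_of_gt hx))
    have hev : ∀ᶠ w in 𝓝[>] z₀, 0 < slope (fun w => uz t₀ w) z₀ w :=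
      hslope.eventually (eventually_gt_nhds hpos')
    have hev2 : ∀ᶠ w in 𝓝[>] z₀, 0 < uz t₀ w := by
      filter_upwards [hev, self_mem_nhdsWithin] with w hw hw'
      have hne : w - z₀ ≠ 0 := sub_ne_zero.2 (ne_of_gt hw')
      have : slope (fun w => uz t₀ w) z₀ w = (uz t₀ w - uz t₀ z₀) / (w - z₀) := by
        simp [slope_def_field]
      rw [this, huz0, sub_zero] at hw
      have := mul_pos hw (sub_pos.2 hw')
      rw [div_mul_cancel₀ _ hne] at this
      exact this
    have hev3 : ∀ᶠ w in 𝓝[>] z₀, 0 < uz t₀ w ∧ w < h t₀ := by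
      filter_upwards [hev2, Ioo_mem_nhdsGT_of_mem (left_mem_Ico.2 hz₀lt)] with w h1 h2
      exact ⟨h1, h2.2⟩
    obtain ⟨b, hb, hIoo⟩ := mem_nhdsGT_iff_exists_Ioo_subset.1 hev3
    set m : ℝ := (z₀ + b) / 2 with hmdef
    have hbz : z₀ < b := hb
    have hmmem : m ∈ Ioo z₀ b := ⟨by rw [hmdef]; linarith, by rw [hmdef]; linarith⟩
    have hmlt : m < h t₀ := (hIoo hmmem).2
    -- f is strictly increasing on [z₀, m]
    have hmono : StrictMonoOn f (Icc z₀ m) := by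
      apply strictMonoOn_of_deriv_pos (convex_Icc _ _)
      · exact hfcont.mono (fun w hw => ⟨hz₀pos.le.trans hw.1, hw.2.trans hmlt.le⟩)
      · intro w hw
        rw [interior_Icc] at hw
        have hwIoo : w ∈ Ioo (0:ℝ) (h t₀) := ⟨hz₀pos.trans hw.1, hw.2.trans hmlt⟩
        rw [(huz t₀ ht₀mem w hwIoo).deriv]
        exact (hIoo ⟨hw.1, hw.2.trans hmmem.2⟩).1
    have h1 : f z₀ < f m :=
      hmono (left_mem_Icc.2 (by linarith [hmmem.1])) (right_mem_Icc.2 (by linarith [hmmem.1]))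
        hmmem.1
    have h2 : f m ≤ f z₀ := hfmax m ⟨hz₀pos.le.trans hmmem.1.le, hmlt.le⟩
    linarith
  -- time derivative: ut t₀ z₀ ≥ ε
  have hutge : ε ≤ ut t₀ z₀ := by
    set φ : ℝ → ℝ := fun s => u s z₀ - ε * s with hφdef
    have hφderiv : HasDerivAt φ (ut t₀ z₀ - ε) t₀ :=
      ((hut t₀ ht₀mem z₀ hz₀mem).sub ((hasDerivAt_id t₀).const_mul ε)).congr_deriv
        (by ring)
    -- φ s ≤ φ t₀ for s slightly left of t₀
    have hhc : ContinuousAt h t₀ :=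
      (hh t₀ (le_of_lt ht₀pos)).continuousAt (Ici_mem_nhds ht₀pos)
    have hev : ∀ᶠ s in 𝓝[<] t₀, φ s ≤ φ t₀ := by
      have h1 : ∀ᶠ s in 𝓝 t₀, z₀ < h s := hhc.eventually (eventually_gt_nhds hz₀lt)
      have h2 : ∀ᶠ s in 𝓝 t₀, 0 < s := eventually_gt_nhds ht₀pos
      filter_upwards [nhdsWithin_le_nhds h1, nhdsWithin_le_nhds h2,
        self_mem_nhdsWithin] with s hs1 hs2 hs3
      have hsQ : (s, z₀) ∈ Q := ⟨⟨hs2.le, le_of_lt (lt_of_lt_of_le hs3 ht₀Q.2)⟩,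
        hz₀pos.le, hs1.le⟩
      exact hvmax (s, z₀) hsQ
    have hslope : Tendsto (slope φ t₀) (𝓝[<] t₀) (𝓝 (ut t₀ z₀ - ε)) :=
      (hasDerivAt_iff_tendsto_slope.1 hφderiv).mono_left
        (nhdsWithin_mono _ (fun x hx => ne_of_lt hx))
    have hge : 0 ≤ ut t₀ z₀ - ε := by
      refine ge_of_tendsto hslope ?_
      filter_upwards [hev, self_mem_nhdsWithin] with s hs1 hs2
      have hne : s - t₀ < 0 := sub_neg.2 hs2
      have : slope φ t₀ s = (φ s - φ t₀) / (s - t₀) := by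
        simp [slope_def_field]
      rw [this]
      exact div_nonneg_of_nonpos (by linarith : φ s - φ t₀ ≤ 0) hne.le
    linarith
  -- contradiction via the PDE
  have hPDE0 := hPDE t₀ ht₀mem z₀ hz₀mem
  have hq0 := hq t₀ ht₀mem z₀ hz₀mem
  nlinarith [mul_nonneg hq0 (hB.trans huB.le), mul_nonpos_of_nonneg_of_nonpos hκ.le huzz0]


theorem gradient_bound_moving_boundary
    (κ κL L cstar : ℝ) (hκ : 0 < κ) (hκL : 0 < κL) (hL : 0 < L) (hc : 0 < cstar)
    (r : ℝ → ℝ) (hr : ContDiff ℝ 1 r) (hrsign : ∀ s : ℝ, s ≠ 0 → s * r s > 0)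
    (hr' : ∀ s : ℝ, 0 ≤ deriv r s)
    (g : ℝ → ℝ) (hg : ∃ K : NNReal, LipschitzWith K g)
    -- the moving boundary h, positive and continuously differentiable, and its ODE
    (h : ℝ → ℝ) (hpos : ∀ t ∈ Ici (0:ℝ), 0 < h t)
    (c d ct dz dt' dzz : ℝ → ℝ → ℝ)
    (hhODE : ∀ t ∈ Ici (0:ℝ),
      HasDerivWithinAt h (∫ z in (0:ℝ)..(h t), g (r (c t z))) (Ici (0:ℝ)) t)
    (hhC1 : ContinuousOn (fun t => ∫ z in (0:ℝ)..(h t), g (r (c t z))) (Ici (0:ℝ)))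
    -- the substrate concentration c, continuous on the closed moving domain, with values in [0,c_*]
    (hccont : ContinuousOn (fun p : ℝ × ℝ => c p.1 p.2)
      {p : ℝ × ℝ | 0 ≤ p.1 ∧ p.2 ∈ Icc (0:ℝ) (h p.1)})
    (hcbounds : ∀ t ∈ Ici (0:ℝ), ∀ z ∈ Icc (0:ℝ) (h t), c t z ∈ Icc (0:ℝ) cstar)
    -- d = ∂_z c, continuous on the closed moving domain
    (hd : ∀ t ∈ Ici (0:ℝ), ∀ z ∈ Icc (0:ℝ) (h t),
      HasDerivWithinAt (c t) (d t z) (Icc (0:ℝ) (h t)) z)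
    (hdcont : ContinuousOn (fun p : ℝ × ℝ => d p.1 p.2)
      {p : ℝ × ℝ | 0 ≤ p.1 ∧ p.2 ∈ Icc (0:ℝ) (h p.1)})
    -- c is a classical solution of ∂_t c = κ ∂_z² c − r(c) in the open moving domain
    (hct : ∀ t ∈ Ioi (0:ℝ), ∀ z ∈ Ioo (0:ℝ) (h t), HasDerivAt (fun s => c s z) (ct t z) t)
    (hdz : ∀ t ∈ Ioi (0:ℝ), ∀ z ∈ Ioo (0:ℝ) (h t), HasDerivAt (fun w => d t w) (dz t z) z)
    (hcPDE : ∀ t ∈ Ioi (0:ℝ), ∀ z ∈ Ioo (0:ℝ) (h t), ct t z = κ * dz t z - r (c t z))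
    -- d is itself a classical solution of ∂_t d = κ ∂_z² d − r'(c) d
    (hdt : ∀ t ∈ Ioi (0:ℝ), ∀ z ∈ Ioo (0:ℝ) (h t), HasDerivAt (fun s => d s z) (dt' t z) t)
    (hdzz : ∀ t ∈ Ioi (0:ℝ), ∀ z ∈ Ioo (0:ℝ) (h t), HasDerivAt (fun w => dz t w) (dzz t z) z)
    (hdPDE : ∀ t ∈ Ioi (0:ℝ), ∀ z ∈ Ioo (0:ℝ) (h t),
      dt' t z = κ * dzz t z - deriv r (c t z) * d t z)
    -- boundary conditions
    (hbc0 : ∀ t ∈ Ici (0:ℝ), d t 0 = 0)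
    (hbc1 : ∀ t ∈ Ici (0:ℝ), c t (h t) + (L * κ / κL) * d t (h t) = cstar)
    -- Lipschitz initial datum
    (c₀ : ℝ → ℝ) (K₀ : NNReal) (hc₀lip : LipschitzOnWith K₀ c₀ (Icc (0:ℝ) (h 0)))
    (hinit : ∀ z ∈ Icc (0:ℝ) (h 0), c 0 z = c₀ z)
    -- the bound M = max{ sup |c₀'|, c_*·κ_L/(κ·L) }, with c₀' = d(0,·)
    (M : ℝ) (hM : M = max (⨆ w : Icc (0:ℝ) (h 0), |d 0 (w : ℝ)|) (cstar * κL / (κ * L))) :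
    (∀ t ∈ Ici (0:ℝ), ∀ z ∈ Icc (0:ℝ) (h t), |d t z| ≤ M) ∧
    (MonotoneOn c₀ (Icc (0:ℝ) (h 0)) →
      ∀ t ∈ Ici (0:ℝ), ∀ z ∈ Icc (0:ℝ) (h t), 0 ≤ d t z ∧ d t z ≤ M) := by
  -- continuity of h on Ici 0
  have hhcont : ContinuousOn h (Ici 0) := fun t ht => (hhODE t ht).continuousWithinAt
  have h0pos : 0 < h 0 := hpos 0 self_mem_Ici
  -- basic facts about M
  have hMge : cstar * κL / (κ * L) ≤ M := hM ▸ le_max_right _ _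
  have hM0 : 0 ≤ M := le_trans (by positivity) hMge
  -- sup term: |d 0 z| ≤ M on the initial slab
  have hbdd : BddAbove (range (fun w : Icc (0:ℝ) (h 0) => |d 0 (w : ℝ)|)) := by
    have hcont : ContinuousOn (fun w => |d 0 w|) (Icc (0:ℝ) (h 0)) := by
      apply ContinuousOn.abs
      exact hdcont.comp (Continuous.continuousOn (continuous_const.prodMk continuous_id))
        (fun w hw => ⟨le_rfl, hw⟩)
    obtain ⟨b, hb⟩ := (isCompact_Icc.image_of_continuousOn hcont).bddAbove
    refine ⟨b, ?_⟩
    rintro x ⟨⟨w, hw⟩, rfl⟩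
    exact hb ⟨w, hw, rfl⟩
  have hsup : ∀ z ∈ Icc (0:ℝ) (h 0), |d 0 z| ≤ M := by
    intro z hz
    have h1 : |d 0 z| ≤ ⨆ w : Icc (0:ℝ) (h 0), |d 0 (w : ℝ)| := le_ciSup hbdd ⟨z, hz⟩
    exact h1.trans (hM ▸ le_max_left _ _)
  -- boundary values of d at z = h t
  have hbd : ∀ t ∈ Ici (0:ℝ), 0 ≤ d t (h t) ∧ d t (h t) ≤ cstar * κL / (κ * L) := by
    intro t ht
    have hA : 0 < L * κ / κL := by positivity
    have h1 := hbc1 t ht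
    have h2 := hcbounds t ht (h t) ⟨(hpos t ht).le, le_rfl⟩
    set e : ℝ := d t (h t) with hedef
    have h3 : L * κ / κL * e ≤ cstar := by linarith [h2.1]
    have h4 : 0 ≤ L * κ / κL * e := by linarith [h2.2]
    constructor
    · by_contra hneg
      push_neg at hneg
      nlinarith
    · rw [div_mul_eq_mul_div, div_le_iff₀ hκL] at h3
      rw [le_div_iff₀ (by positivity : (0:ℝ) < κ * L)]
      nlinarith
  -- upper bound d ≤ M for all points
  have key1 : ∀ t ∈ Ici (0:ℝ), ∀ z ∈ Icc (0:ℝ) (h t), d t z ≤ M := by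
    intro t ht z hz
    refine parab_max_principle hκ t ht h hhcont d dt' dz dzz
      (fun s w => deriv r (c s w)) ?_ (fun s _ w _ => hr' _) hdt hdz hdzz hdPDE M hM0
      ?_ ?_ ?_ t ⟨ht, le_rfl⟩ z hz
    · exact hdcont.mono (fun p hp => ⟨hp.1.1, hp.2⟩)
    · intro w hw
      exact (le_abs_self _).trans (hsup w hw)
    · intro s hs
      rw [hbc0 s hs.1]; exact hM0
    · intro s hs
      exact ((hbd s hs.1).2).trans hMge
  -- lower bound: general, -d ≤ B for suitable B
  have keyneg : ∀ B : ℝ, 0 ≤ B → (∀ w ∈ Icc (0:ℝ) (h 0), -(d 0 w) ≤ B) →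
      ∀ t ∈ Ici (0:ℝ), ∀ z ∈ Icc (0:ℝ) (h t), -(d t z) ≤ B := by
    intro B hB hinitB t ht z hz
    refine parab_max_principle hκ t ht h hhcont (fun s w => -(d s w)) (fun s w => -(dt' s w))
      (fun s w => -(dz s w)) (fun s w => -(dzz s w))
      (fun s w => deriv r (c s w)) ?_ (fun s _ w _ => hr' _) ?_ ?_ ?_ ?_ B hB
      hinitB ?_ ?_ t ⟨ht, le_rfl⟩ z hz
    · exact (hdcont.mono (fun p hp => ⟨hp.1.1, hp.2⟩)).neg
    · intro s hs w hw; exact (hdt s hs w hw).neg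
    · intro s hs w hw; exact (hdz s hs w hw).neg
    · intro s hs w hw; exact (hdzz s hs w hw).neg
    · intro s hs w hw
      show -(dt' s w) = κ * -(dzz s w) - deriv r (c s w) * -(d s w)
      rw [hdPDE s hs w hw]; ring
    · intro s hs
      show -(d s 0) ≤ B
      rw [hbc0 s hs.1]; simpa using hB
    · intro s hs
      show -(d s (h s)) ≤ B
      have := (hbd s hs.1).1; linarith
  have habs : ∀ t ∈ Ici (0:ℝ), ∀ z ∈ Icc (0:ℝ) (h t), |d t z| ≤ M := by
    intro t ht z hz
    rw [abs_le]
    refine ⟨?_, key1 t ht z hz⟩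
    have := keyneg M hM0 (fun w hw => (neg_le_abs _).trans (hsup w hw)) t ht z hz
    linarith
  refine ⟨habs, ?_⟩
  -- monotone case
  intro hmono t ht z hz
  have hd0 : ∀ w ∈ Icc (0:ℝ) (h 0), 0 ≤ d 0 w := by
    intro w hw
    have hder := hd 0 self_mem_Ici w hw
    have hslope : Tendsto (slope (c 0) w) (𝓝[Icc (0:ℝ) (h 0) \ {w}] w) (𝓝 (d 0 w)) :=
      hasDerivWithinAt_iff_tendsto_slope.1 hder
    have hne : (𝓝[Icc (0:ℝ) (h 0) \ {w}] w).NeBot := by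
      rw [← mem_closure_iff_nhdsWithin_neBot]
      rcases hw.2.lt_or_eq with h1 | h1
      · apply closure_mono (show Ioc w (h 0) ⊆ Icc (0:ℝ) (h 0) \ {w} from
          fun x hx => ⟨⟨hw.1.trans hx.1.le, hx.2⟩, ne_of_gt hx.1⟩)
        rw [closure_Ioc (ne_of_lt h1)]
        exact ⟨le_rfl, h1.le⟩
      · have h2 : 0 < w := h1 ▸ h0pos
        apply closure_mono (show Ico (0:ℝ) w ⊆ Icc (0:ℝ) (h 0) \ {w} from
          fun x hx => ⟨⟨hx.1, hx.2.le.trans hw.2⟩, ne_of_lt hx.2⟩)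
        rw [closure_Ico (ne_of_lt h2)]
        exact ⟨hw.1, le_rfl⟩
    refine ge_of_tendsto hslope ?_
    filter_upwards [self_mem_nhdsWithin] with x hx
    obtain ⟨hxI, hxne⟩ := hx
    have hcx : c 0 x = c₀ x := hinit x hxI
    have hcw : c 0 w = c₀ w := hinit w hw
    have hs : slope (c 0) w x = (c₀ x - c₀ w) / (x - w) := by
      simp [slope_def_field, hcx, hcw]
    rw [hs]
    rcases lt_or_gt_of_ne hxne with h1 | h1
    · apply div_nonneg_of_nonpos
      · have := hmono hxI hw h1.le; linarith
      · linarith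
    · apply div_nonneg
      · have := hmono hw hxI h1.le; linarith
      · linarith
  have hlow := keyneg 0 le_rfl (fun w hw => by simpa using hd0 w hw) t ht z hz
  exact ⟨by linarith, key1 t ht z hz⟩
end
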